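/- arXiv:2604.23852 — 2 statements merged into one kernel-verified Lean document; each statement's English description precedes it below -/
import Mathlib

section
/- For any real α and λ, and any n ∈ ℤ, the potential V(θ) = 2λ cos(2πθ) satisfies V(θ + 1/2) = −V(θ) for all θ; consequently, if H_θ denotes the doubly-infinite Jacobi matrix with off-diagonal entries 1 and diagonal entries V(θ + nα), then for all i, j ∈ ℤ and all k ≥ 0, (H_θ^{2k+1})_{i,j} = (−1)^{i−j+1} (H_{θ+1/2}^{2k+1})_{i,j}. -/
open Real

/-- Entries of the (2k+1)-st power of the doubly infinite Jacobi (Almost Mathieu)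
matrix with off-diagonal entries 1 and diagonal entries `2λ cos(2π(jα+θ))`,
computed by the band-matrix recursion
`(H^{n+1})_{ij} = (H^n)_{i,j-1} + (H^n)_{i,j+1} + (H^n)_{ij} V(θ+jα)`. -/
noncomputable def Hpow (α lam θ : ℝ) : ℕ → ℤ → ℤ → ℝ
  | 0 => fun i j => if i = j then 1 else 0
  | n + 1 => fun i j =>
      Hpow α lam θ n i (j - 1) + Hpow α lam θ n i (j + 1)
        + Hpow α lam θ n i j * (2 * lam * Real.cos (2 * Real.pi * ((j : ℝ) * α + θ)))

lemma Vflip (lam x : ℝ) : 2 * lam * Real.cos (2 * Real.pi * (x + 1 / 2))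
    = -(2 * lam * Real.cos (2 * Real.pi * x)) := by
  have : 2 * Real.pi * (x + 1 / 2) = 2 * Real.pi * x + Real.pi := by ring
  rw [this, Real.cos_add_pi]; ring

lemma negOne_zadd (a : ℤ) : (-1 : ℝ) ^ (a + 1) = -(-1 : ℝ) ^ a := by
  rw [zpow_add_one₀ (by norm_num : (-1:ℝ) ≠ 0)]; ring

lemma Hkey (α lam θ : ℝ) (n : ℕ) : ∀ i j : ℤ,
    Hpow α lam θ n i j = (-1 : ℝ) ^ (i - j + n) * Hpow α lam (θ + 1 / 2) n i j := by
  induction n with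
  | zero =>
    intro i j
    by_cases h : i = j <;> simp [Hpow, h]
  | succ n ih =>
    intro i j
    have e1 : i - (j - 1) + (n : ℤ) = (i - j + n) + 1 := by ring
    have e2 : i - j + (n : ℤ) = (i - (j + 1) + n) + 1 := by ring
    have e3 : i - j + ((n + 1 : ℕ) : ℤ) = (i - j + n) + 1 := by push_cast; ring
    have hV : 2 * lam * Real.cos (2 * Real.pi * ((j : ℝ) * α + (θ + 1 / 2)))
        = -(2 * lam * Real.cos (2 * Real.pi * ((j : ℝ) * α + θ))) :=
      by rw [show (j:ℝ) * α + (θ + 1 / 2) = ((j:ℝ) * α + θ) + 1 / 2 by ring]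
         exact Vflip lam _
    simp only [Hpow]
    rw [ih i (j - 1), ih i (j + 1), ih i j, hV, e1, e3, negOne_zadd]
    rw [show (-1:ℝ) ^ (i - j + (n:ℤ)) = -(-1:ℝ) ^ (i - (j+1) + (n:ℤ)) by
      rw [e2, negOne_zadd]]
    ring

/-- The potential `V(θ) = 2λ cos 2πθ` satisfies `V(θ+1/2) = -V(θ)`; consequently for
the Jacobi matrix `H_θ` with diagonal `V(θ+nα)`, for all `i, j ∈ ℤ` and `k ≥ 0`,
`(H_θ^{2k+1})_{ij} = (−1)^{i−j+1} (H_{θ+1/2}^{2k+1})_{ij}`. -/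
theorem stmt1 (α lam : ℝ) :
    (∀ θ : ℝ, 2 * lam * Real.cos (2 * Real.pi * (θ + 1 / 2))
        = -(2 * lam * Real.cos (2 * Real.pi * θ))) ∧
    (∀ (θ : ℝ) (i j : ℤ) (k : ℕ),
      Hpow α lam θ (2 * k + 1) i j
        = (-1 : ℝ) ^ (i - j + 1) * Hpow α lam (θ + 1 / 2) (2 * k + 1) i j) := by
  constructor
  · intro θ; exact Vflip lam θ
  · intro θ i j k
    rw [Hkey α lam θ (2 * k + 1) i j]
    congr 1
    have : (i - j + ((2 * k + 1 : ℕ) : ℤ)) = (i - j + 1) + (2 * k : ℕ) := by push_cast; ring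
    rw [this, zpow_add₀ (by norm_num : (-1:ℝ) ≠ 0), zpow_natCast,
      Even.neg_one_pow ⟨k, by ring⟩, mul_one]
end

section
/- Let q ≥ 1, α = p/q, λ > 0, θ ∈ ℝ, and let F_q : V^per → V^anti be the linear map sending the standard basis e_j of q-periodic sequences ((e_j)_n = 1 if n ≡ j mod q, else 0) to f_j with (f_j)_n = exp(2πi(jα+θ₊)n), where θ₊ satisfies θ₊ − α ≡ −θ₊ mod 1 and q(jα+θ₊) ∈ 1/2 + ℤ. Then F_q conjugates: (1) the reflection R_{θ₊}: (ψ_n) ↦ (ψ_{−1−n}) on V^per to the reflection R₀: (ψ_n) ↦ (ψ_{−n}) on V^anti, i.e. F_q R_{θ₊} = R₀ F_q; (2) the periodic Laplacian Δ^per (shift-plus-inverse-shift restricted to V^per) to the diagonal operator D_{q,0} with entries 2cos(2παn), i.e. F_q Δ^per = D_{q,0} F_q; and (3) the diagonal operator D_{q,θ₊} with entries 2cos(2π(θ₊+nα)) to the antiperiodic Laplacian Δ^anti, i.e. F_q D_{q,θ₊} = Δ^anti F_q. -/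
open Real

lemma twoCosBase (a : ℝ) :
    Complex.exp (2 * (Real.pi : ℂ) * Complex.I * (a : ℂ)) +
      Complex.exp (-(2 * (Real.pi : ℂ) * Complex.I * (a : ℂ))) =
    ((2 * Real.cos (2 * Real.pi * a) : ℝ) : ℂ) := by
  push_cast [Complex.ofReal_cos]
  rw [Complex.two_cos]
  ring_nf

lemma expHalfAddInt (m : ℤ) :
    Complex.exp ((Real.pi : ℂ) * Complex.I + (m : ℂ) * (2 * (Real.pi : ℂ) * Complex.I)) = -1 := by
  rw [Complex.exp_add, Complex.exp_pi_mul_I, Complex.exp_int_mul_two_pi_mul_I]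
  ring

lemma expIntMul' (m : ℤ) :
    Complex.exp ((m : ℂ) * (2 * (Real.pi : ℂ) * Complex.I)) = 1 :=
  Complex.exp_int_mul_two_pi_mul_I m

/-- Aubry–André duality at rational frequency, on basis vectors: with
`e_j` the standard basis of q-periodic sequences and `f_j = F_q e_j` the Fourier basis
`(f_j)_n = exp(2πi(jα+θ₊)n)` of q-antiperiodic sequences (where `θ₊ − α ≡ −θ₊ mod 1`
and `q(jα+θ₊) ∈ 1/2 + ℤ`), the map `F_q` conjugates:
(1) the reflection `R_{θ₊} : ψ_n ↦ ψ_{−1−n}` to `R₀ : ψ_n ↦ ψ_{−n}`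
    (`R_{θ₊} e_j = e_{−1−j}` and `f_{−1−j}(n) = f_j(−n)`);
(2) the periodic Laplacian to the diagonal operator `D_{q,0}`
    (`Δ e_j = e_{j−1} + e_{j+1}` and `f_{j−1} + f_{j+1} = 2cos(2παn) f_j`);
(3) the diagonal operator `D_{q,θ₊}` to the antiperiodic Laplacian
    (`D_{q,θ₊} e_j = 2cos(2π(θ₊+jα)) e_j` and `f_j(n−1)+f_j(n+1) = 2cos(2π(θ₊+jα)) f_j(n)`). -/
theorem stmt14 (p q : ℤ) (hq : 1 ≤ q) (lam : ℝ) (hlam : 0 < lam)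
    (α θp : ℝ) (hα : α = (p : ℝ) / (q : ℝ))
    (hθ1 : ∃ n : ℤ, (θp - α) - (-θp) = (n : ℝ))
    (hθ2 : ∀ j : ℤ, ∃ n : ℤ, (q : ℝ) * ((j : ℝ) * α + θp) = 1 / 2 + (n : ℝ)) :
    let e : ℤ → ℤ → ℂ := fun j n => if (n - j) % q = 0 then 1 else 0
    let f : ℤ → ℤ → ℂ := fun j n =>
      Complex.exp (2 * (Real.pi : ℂ) * Complex.I * (((j : ℝ) * α + θp : ℝ) : ℂ) * (n : ℂ))
    -- the f_j are q-antiperiodic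
    (∀ j n : ℤ, f j (n + q) = -f j n) ∧
    -- (1): F_q R_{θ₊} = R₀ F_q on the basis
    (∀ j n : ℤ, e j (-1 - n) = e (-1 - j) n) ∧
    (∀ j n : ℤ, f (-1 - j) n = f j (-n)) ∧
    -- (2): F_q Δ^per = D_{q,0} F_q on the basis
    (∀ j n : ℤ, e j (n - 1) + e j (n + 1) = e (j - 1) n + e (j + 1) n) ∧
    (∀ j n : ℤ, f (j - 1) n + f (j + 1) n
      = ((2 * Real.cos (2 * Real.pi * α * (n : ℝ)) : ℝ) : ℂ) * f j n) ∧
    -- (3): F_q D_{q,θ₊} = Δ^anti F_q on the basis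
    (∀ j n : ℤ, ((2 * Real.cos (2 * Real.pi * (θp + (n : ℝ) * α)) : ℝ) : ℂ) * e j n
      = ((2 * Real.cos (2 * Real.pi * (θp + (j : ℝ) * α)) : ℝ) : ℂ) * e j n) ∧
    (∀ j n : ℤ, f j (n - 1) + f j (n + 1)
      = ((2 * Real.cos (2 * Real.pi * (θp + (j : ℝ) * α)) : ℝ) : ℂ) * f j n) := by
  intro e f
  have hq0 : (q : ℝ) ≠ 0 := by positivity
  refine ⟨?_, ?_, ?_, ?_, ?_, ?_, ?_⟩
  · -- antiperiodicity
    intro j n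
    obtain ⟨m, hm⟩ := hθ2 j
    have harg : 2 * (Real.pi : ℂ) * Complex.I * (((j : ℝ) * α + θp : ℝ) : ℂ) * ((n + q : ℤ) : ℂ)
        = 2 * (Real.pi : ℂ) * Complex.I * (((j : ℝ) * α + θp : ℝ) : ℂ) * ((n : ℤ) : ℂ)
          + ((Real.pi : ℂ) * Complex.I + (m : ℂ) * (2 * (Real.pi : ℂ) * Complex.I)) := by
      have hmc : (q : ℂ) * ((j : ℂ) * (α : ℂ) + (θp : ℂ)) = 1 / 2 + (m : ℂ) := by
        have := congrArg (Complex.ofReal) hm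
        push_cast at this
        exact this
      push_cast
      linear_combination (2 * (Real.pi : ℂ) * Complex.I) * hmc
    show Complex.exp _ = -Complex.exp _
    rw [harg, Complex.exp_add, expHalfAddInt]
    ring
  · -- (1) for e
    intro j n
    show (if ((-1 - n) - j) % q = 0 then (1:ℂ) else 0) = if (n - (-1 - j)) % q = 0 then 1 else 0
    have h : ((-1 - n) - j) % q = 0 ↔ (n - (-1 - j)) % q = 0 := by
      constructor <;> intro h
      · have := Int.dvd_of_emod_eq_zero h
        exact Int.emod_eq_zero_of_dvd (by rw [show n - (-1 - j) = -(-1 - n - j) by ring]; exact dvd_neg.mpr this)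
      · have := Int.dvd_of_emod_eq_zero h
        exact Int.emod_eq_zero_of_dvd (by rw [show -1 - n - j = -(n - (-1 - j)) by ring]; exact dvd_neg.mpr this)
    exact if_congr h rfl rfl
  · -- (1) for f
    intro j n
    obtain ⟨m, hm⟩ := hθ1
    have hmc : 2 * (θp : ℂ) - (α : ℂ) = (m : ℂ) := by
      exact_mod_cast congrArg Complex.ofReal (by linarith : 2 * θp - α = (m : ℝ))
    have harg : 2 * (Real.pi : ℂ) * Complex.I * ((((-1 - j : ℤ) : ℝ) * α + θp : ℝ) : ℂ) * ((n : ℤ) : ℂ)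
        = 2 * (Real.pi : ℂ) * Complex.I * (((j : ℝ) * α + θp : ℝ) : ℂ) * (((-n : ℤ)) : ℂ)
          + ((n * m : ℤ) : ℂ) * (2 * (Real.pi : ℂ) * Complex.I) := by
      push_cast
      linear_combination (2 * (Real.pi : ℂ) * Complex.I * (n : ℂ)) * hmc
    show Complex.exp _ = Complex.exp _
    rw [harg, Complex.exp_add, expIntMul', mul_one]
  · -- (2) for e
    intro j n
    show (if ((n - 1) - j) % q = 0 then (1:ℂ) else 0) + (if ((n + 1) - j) % q = 0 then (1:ℂ) else 0)
      = (if (n - (j - 1)) % q = 0 then (1:ℂ) else 0) + (if (n - (j + 1)) % q = 0 then (1:ℂ) else 0)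
    rw [show (n - 1) - j = n - (j + 1) by ring, show (n + 1) - j = n - (j - 1) by ring, add_comm]
  · -- (2) for f
    intro j n
    have key := twoCosBase (α * (n : ℝ))
    have h1 : f (j - 1) n
        = Complex.exp (-(2 * (Real.pi : ℂ) * Complex.I * ((α * (n : ℝ) : ℝ) : ℂ))) * f j n := by
      show Complex.exp _ = _ * Complex.exp _
      rw [← Complex.exp_add]; congr 1; push_cast; ring
    have h2 : f (j + 1) n
        = Complex.exp (2 * (Real.pi : ℂ) * Complex.I * ((α * (n : ℝ) : ℝ) : ℂ)) * f j n := by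
      show Complex.exp _ = _ * Complex.exp _
      rw [← Complex.exp_add]; congr 1; push_cast; ring
    rw [h1, h2, show 2 * Real.pi * α * (n : ℝ) = 2 * Real.pi * (α * (n : ℝ)) by ring, ← key]
    ring
  · -- (3) for e
    intro j n
    by_cases h : (n - j) % q = 0
    · obtain ⟨k, hk⟩ := Int.dvd_of_emod_eq_zero h
      have hn : (n : ℝ) = (j : ℝ) + (q : ℝ) * (k : ℝ) := by
        have : (n : ℤ) = j + q * k := by linarith [hk]
        exact_mod_cast congrArg (Int.cast : ℤ → ℝ) this
      have hc : Real.cos (2 * Real.pi * (θp + (n : ℝ) * α))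
          = Real.cos (2 * Real.pi * (θp + (j : ℝ) * α)) := by
        rw [show 2 * Real.pi * (θp + (n : ℝ) * α)
            = 2 * Real.pi * (θp + (j : ℝ) * α) + ((k * p : ℤ) : ℝ) * (2 * Real.pi) by
          rw [hn, hα]; push_cast; field_simp; ring]
        exact Real.cos_add_int_mul_two_pi _ _
      simp only [e, h, if_pos, hc]
    · simp only [e, h, if_false, mul_zero]
  · -- (3) for f
    intro j n
    have key := twoCosBase (θp + (j : ℝ) * α)
    have h1 : f j (n - 1)
        = Complex.exp (-(2 * (Real.pi : ℂ) * Complex.I * ((θp + (j : ℝ) * α : ℝ) : ℂ))) * f j n := by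
      show Complex.exp _ = _ * Complex.exp _
      rw [← Complex.exp_add]; congr 1; push_cast; ring
    have h2 : f j (n + 1)
        = Complex.exp (2 * (Real.pi : ℂ) * Complex.I * ((θp + (j : ℝ) * α : ℝ) : ℂ)) * f j n := by
      show Complex.exp _ = _ * Complex.exp _
      rw [← Complex.exp_add]; congr 1; push_cast; ring
    rw [h1, h2, ← key]
    ring
end
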